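/- (Theorem 1, core rank statement) Let F_q(x) have distinct rational places P₁, …, P_s and a place P_∞ of degree μ distinct from these. Let β_j^{(i)} be chosen as in Lemma 1 (β_j^{(1)} ∈ L((j−1)(P₁ − P₂)) \ {0}, β_j^{(i)} ∈ L(j(P_i − P₁)) \ {0}). Suppose ℓ ∈ ℕ and d₁, …, d_s ∈ ℕ₀ with 1 ≤ d₁ + ⋯ + d_s ≤ ℓμ, and suppose β := Σ_{i=1}^s Σ_{j=1}^{d_i} b_j^{(i)} β_j^{(i)} satisfies ν_{P_∞}(β) ≥ ℓ for some b_j^{(i)} ∈ F_q. Then all b_j^{(i)} = 0. -/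

import Mathlib

open scoped BigOperators

/-- An algebraic function field `F` of one variable over the full constant field `K`,
presented through the set of its places: each place `P` has a normalized discrete
valuation `v P` (its value on `0` is irrelevant/junk) and a degree `deg P ≥ 1`.
The axioms are the standard facts: multiplicativity and the ultrametric inequality of
valuations, triviality on constants, finiteness of the support of a principal divisor,
the degree formula `deg(div f) = 0`, the full-constant-field property, and the fact
that places of degree one have residue field `K`. -/
structure FFPlaces (K F : Type*) [Field K] [Field F] [Algebra K F] where
  Place : Type
  v : Place → F → ℤ
  deg : Place → ℕ
  deg_pos : ∀ P, 0 < deg P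
  v_mul : ∀ (P) (x y : F), x ≠ 0 → y ≠ 0 → v P (x * y) = v P x + v P y
  v_add : ∀ (P) (x y : F), x ≠ 0 → y ≠ 0 → x + y ≠ 0 → min (v P x) (v P y) ≤ v P (x + y)
  v_algebraMap : ∀ (P) (c : K), c ≠ 0 → v P (algebraMap K F c) = 0
  finite_support : ∀ f : F, f ≠ 0 → {P | v P f ≠ 0}.Finite
  degree_formula : ∀ f : F, f ≠ 0 → (∑ᶠ P, (deg P : ℤ) * v P f) = 0
  full_constants : ∀ f : F, f ≠ 0 → (∀ P, 0 ≤ v P f) → ∃ c : K, f = algebraMap K F c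
  residue_one : ∀ P, deg P = 1 → ∀ f g : F, f ≠ 0 → g ≠ 0 → v P f = v P g →
      ∃ c : K, f = algebraMap K F c * g ∨ v P f < v P (f - algebraMap K F c * g)

namespace FFPlaces

variable {K F : Type*} [Field K] [Field F] [Algebra K F]

/-- The degree of a divisor (a finitely supported `ℤ`-valued function on places). -/
def degD (FF : FFPlaces K F) (D : FF.Place →₀ ℤ) : ℤ :=
  ∑ P ∈ D.support, (FF.deg P : ℤ) * D P

/-- The Riemann–Roch space `L(D) = {f ∈ F* : div f + D ≥ 0} ∪ {0}` of a divisor `D`,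
as a `K`-subspace of `F`. -/
def RR (FF : FFPlaces K F) (D : FF.Place →₀ ℤ) : Submodule K F where
  carrier := {f | f = 0 ∨ ∀ P, -(D P) ≤ FF.v P f}
  zero_mem' := Or.inl rfl
  add_mem' := by
    intro a b ha hb
    simp only [Set.mem_setOf_eq] at *
    by_cases ha0 : a = 0
    · simpa [ha0] using hb
    by_cases hb0 : b = 0
    · simpa [hb0] using ha
    by_cases hab : a + b = 0
    · exact Or.inl hab
    have ha' := ha.resolve_left ha0
    have hb' := hb.resolve_left hb0
    exact Or.inr fun P =>
      le_trans (le_min (ha' P) (hb' P)) (FF.v_add P a b ha0 hb0 hab)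
  smul_mem' := by
    intro c x hx
    simp only [Set.mem_setOf_eq] at *
    by_cases hc : c = 0
    · left; simp [hc]
    by_cases hx0 : x = 0
    · left; simp [hx0]
    have hx' := hx.resolve_left hx0
    have halg : algebraMap K F c ≠ 0 :=
      (map_ne_zero_iff (algebraMap K F) (RingHom.injective _)).mpr hc
    refine Or.inr fun P => ?_
    rw [Algebra.smul_def, FF.v_mul P _ x halg hx0, FF.v_algebraMap P c hc]
    simpa using hx' P

end FFPlaces

/-! The function `β = ∑ b_j^{(i)} β_j^{(i)}` lies in `L((d₁ - 1)P₁ + d₂P₂ + ⋯ + d_sP_s - ℓP_∞)`, a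
divisor of degree `∑ dᵢ - 1 - ℓμ < 0`, so `β = 0` by the degree formula `deg (div β) = 0`.
The same formula shows that `β_j^{(i)}` has a pole of exact order `j` at `P_i` for `i ≥ 2`
and of exact order `j - 1` at `P₁` for `i = 1`. Comparing pole orders at `P_i` then forces the
coefficients of the `i`-th row to vanish for `i ≥ 2`, and afterwards at `P₁` those of the first
row. -/

open Finsupp

namespace FFPlaces

variable {K F : Type*} [Field K] [Field F] [Algebra K F] (FF : FFPlaces K F)

lemma v_one (Q : FF.Place) : FF.v Q 1 = 0 := by
  simpa using FF.v_algebraMap Q 1 one_ne_zero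

open Classical in
noncomputable def val (Q : FF.Place) : AddValuation F (WithTop ℤ) :=
  AddValuation.of (fun x => if x = 0 then ⊤ else (FF.v Q x : WithTop ℤ)) (if_pos rfl)
    (by simp [FF.v_one Q])
    (fun x y => by
      by_cases hx : x = 0
      · simp [hx]
      by_cases hy : y = 0
      · simp [hy]
      by_cases hxy : x + y = 0
      · simp [hxy]
      simp only [hx, hy, hxy, if_false, ← WithTop.coe_min, WithTop.coe_le_coe]
      exact FF.v_add Q x y hx hy hxy)
    (fun x y => by
      by_cases hx : x = 0
      · simp [hx]
      by_cases hy : y = 0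
      · simp [hy]
      simp [hx, hy, FF.v_mul Q x y hx hy])

variable {FF}

lemma val_of_ne_zero {Q : FF.Place} {x : F} (hx : x ≠ 0) : FF.val Q x = FF.v Q x := by
  simp [val, hx]

lemma val_smul (Q : FF.Place) {c : K} (hc : c ≠ 0) (x : F) : FF.val Q (c • x) = FF.val Q x := by
  have hc' : FF.val Q (algebraMap K F c) = 0 := by
    rw [val_of_ne_zero ((map_ne_zero _).mpr hc), FF.v_algebraMap Q c hc]; rfl
  rw [Algebra.smul_def, AddValuation.map_mul, hc', zero_add]

lemma val_le_val_smul (Q : FF.Place) (c : K) (x : F) : FF.val Q x ≤ FF.val Q (c • x) := by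
  rcases eq_or_ne c 0 with rfl | hc
  · simp
  · exact (val_smul Q hc x).ge

lemma mem_RR_iff {D : FF.Place →₀ ℤ} {f : F} :
    f ∈ FF.RR D ↔ ∀ Q, (((-D Q : ℤ)) : WithTop ℤ) ≤ FF.val Q f := by
  by_cases hf : f = 0
  · simp [hf, RR]
  · simp only [RR, Submodule.mem_mk, AddSubmonoid.mem_mk, AddSubsemigroup.mem_mk,
      Set.mem_ofPred_eq, hf, false_or, val_of_ne_zero hf, WithTop.coe_le_coe]

lemma RR_mono {D D' : FF.Place →₀ ℤ} (h : D ≤ D') : FF.RR D ≤ FF.RR D' := fun _ hf =>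
  mem_RR_iff.mpr fun Q => (WithTop.coe_le_coe.mpr (neg_le_neg (h Q))).trans (mem_RR_iff.mp hf Q)

lemma mem_RR_sub_single {D : FF.Place →₀ ℤ} {f : F} {Q : FF.Place} {n : ℤ} (hf : f ∈ FF.RR D)
    (hDQ : D Q = 0) (hn : (n : WithTop ℤ) ≤ FF.val Q f) : f ∈ FF.RR (D - single Q n) := by
  refine mem_RR_iff.mpr fun R => ?_
  rcases eq_or_ne R Q with rfl | hR
  · simpa [hDQ] using hn
  · simpa [single_eq_of_ne hR] using mem_RR_iff.mp hf R

lemma degD_eq_linearCombination (D : FF.Place →₀ ℤ) :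
    FF.degD D = linearCombination ℤ (fun P => (FF.deg P : ℤ)) D := by
  simp only [degD, linearCombination_apply, Finsupp.sum, smul_eq_mul, mul_comm]

lemma eq_zero_of_mem_RR_of_degD_neg {D : FF.Place →₀ ℤ} {f : F} (hf : f ∈ FF.RR D)
    (hD : FF.degD D < 0) : f = 0 := by
  by_contra hf0
  have hv : ∀ P, -D P ≤ FF.v P f := hf.resolve_left hf0
  have hsuppD : (Function.support fun P => (FF.deg P : ℤ) * D P) ⊆ D.support := fun P hP =>
    mem_support_iff.mpr (right_ne_zero_of_mul hP)
  have hsuppv : (Function.support fun P => (FF.deg P : ℤ) * FF.v P f).Finite :=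
    (FF.finite_support f hf0).subset fun P hP => right_ne_zero_of_mul hP
  have hdegD : FF.degD D = ∑ᶠ P, (FF.deg P : ℤ) * D P :=
    (finsum_eq_sum_of_support_subset _ hsuppD).symm
  refine hD.not_ge ?_
  calc 0 ≤ ∑ᶠ P, (FF.deg P : ℤ) * (FF.v P f + D P) :=
        finsum_nonneg fun P => mul_nonneg (Int.natCast_nonneg _) (by linarith [hv P])
    _ = (∑ᶠ P, (FF.deg P : ℤ) * FF.v P f) + ∑ᶠ P, (FF.deg P : ℤ) * D P := by
        simp only [mul_add]
        exact finsum_add_distrib hsuppv ((D.support.finite_toSet).subset hsuppD)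
    _ = FF.degD D := by rw [FF.degree_formula f hf0, zero_add, hdegD]

lemma val_eq_of_mem_RR_of_degD_lt {D : FF.Place →₀ ℤ} {f : F} (hf : f ∈ FF.RR D) (hf0 : f ≠ 0)
    {Q : FF.Place} (hD : FF.degD D < FF.deg Q) : FF.val Q f = ((-D Q : ℤ) : WithTop ℤ) := by
  refine le_antisymm ?_ (mem_RR_iff.mp hf Q)
  -- a zero of higher order at `Q` would put `f` in `L(D - Q)`, of negative degree
  by_contra! hlt
  rw [val_of_ne_zero hf0, WithTop.coe_lt_coe] at hlt
  have hf' : f ∈ FF.RR (D - single Q 1) := by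
    refine mem_RR_iff.mpr fun R => ?_
    rcases eq_or_ne R Q with rfl | hR
    · rw [val_of_ne_zero hf0, WithTop.coe_le_coe]
      simp only [coe_sub, Pi.sub_apply, single_eq_same]
      omega
    · simpa [single_eq_of_ne hR] using mem_RR_iff.mp hf R
  refine hf0 (eq_zero_of_mem_RR_of_degD_neg hf' ?_)
  simp only [degD_eq_linearCombination, map_sub, linearCombination_single, one_smul] at hD ⊢
  omega

lemma coeff_eq_zero_of_add_sum_smul_eq_zero {ι : Type*} [LinearOrder ι] (Q : FF.Place)
    {s : Finset ι} {g : ι → F} {r : F} (hanti : StrictAntiOn (fun j => FF.val Q (g j)) s)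
    (hr : ∀ j ∈ s, FF.val Q (g j) < FF.val Q r) {b : ι → K} (h : r + ∑ j ∈ s, b j • g j = 0) :
    ∀ j ∈ s, b j = 0 := by
  classical
  -- the term of largest index has strictly the smallest valuation, so nothing can cancel it
  induction s using Finset.induction_on_max with
  | empty => simp
  | insert a s hlt ih =>
    have ha : a ∉ s := fun h => lt_irrefl a (hlt a h)
    have haI := Finset.mem_insert_self a s
    rw [Finset.sum_insert ha, add_left_comm] at h
    have hba : b a = 0 := by
      by_contra hba
      have hrest : FF.val Q (g a) < FF.val Q (r + ∑ j ∈ s, b j • g j) := by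
        refine AddValuation.map_lt_add _ (hr a haI)
          (AddValuation.map_lt_sum _ (hr a haI).ne_top fun j hj => ?_)
        exact (hanti (Finset.mem_insert_of_mem hj) haI (hlt j hj)).trans_le
          (val_le_val_smul Q _ _)
      have := AddValuation.map_add_eq_of_lt_left _ ((val_smul Q hba (g a)).trans_lt hrest)
      rw [h, AddValuation.map_zero, val_smul Q hba] at this
      exact (hr a haI).ne_top this.symm
    rw [hba, zero_smul, zero_add] at h
    have ih' := ih (hanti.mono (Finset.subset_insert a s))
      (fun j hj => hr j (Finset.mem_insert_of_mem hj)) h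
    intro j hj
    rcases Finset.mem_insert.mp hj with rfl | hj
    exacts [hba, ih' j hj]

lemma val_eq_of_mem_RR_single_sub_single {Q Q' : FF.Place} (hQQ' : Q ≠ Q')
    (hdeg : FF.deg Q = FF.deg Q') {n : ℤ} {f : F} (hf : f ∈ FF.RR (single Q n - single Q' n))
    (hf0 : f ≠ 0) : FF.val Q f = ((-n : ℤ) : WithTop ℤ) := by
  have hD : FF.degD (single Q n - single Q' n) < FF.deg Q := by
    simp only [degD_eq_linearCombination, map_sub, linearCombination_single, smul_eq_mul, hdeg,
      sub_self, Nat.cast_pos]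
    exact FF.deg_pos Q'
  simpa [single_eq_of_ne hQQ'] using val_eq_of_mem_RR_of_degD_lt hf hf0 hD

lemma val_nonneg_of_mem_RR_single_sub_single {Q Q' R : FF.Place} (hRQ : R ≠ Q) {n : ℤ}
    (hn : 0 ≤ n) {f : F} (hf : f ∈ FF.RR (single Q n - single Q' n)) : 0 ≤ FF.val R f := by
  refine le_trans ?_ (mem_RR_iff.mp hf R)
  rw [coe_sub, Pi.sub_apply, single_eq_of_ne hRQ, neg_sub, sub_zero, ← WithTop.coe_zero,
    WithTop.coe_le_coe]
  rcases eq_or_ne R Q' with rfl | hRQ'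
  · simpa using hn
  · simp [single_eq_of_ne hRQ']

lemma strictAntiOn_val_of_eq_sub {Q : FF.Place} {g : ℕ → F} {s : Set ℕ} {c : ℤ}
    (h : ∀ j ∈ s, FF.val Q (g j) = ((c - j : ℤ) : WithTop ℤ)) :
    StrictAntiOn (fun j => FF.val Q (g j)) s := by
  intro j hj k hk hjk
  simp only [h j hj, h k hk, WithTop.coe_lt_coe]
  omega

theorem coeff_eq_zero_of_sum_smul_eq_zero {s : ℕ} [NeZero s] {P : Fin s → FF.Place}
    (hP : Function.Injective P) (hPdeg : ∀ i, FF.deg (P i) = 1) (h01 : (0 : Fin s) ≠ 1)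
    {β : Fin s → ℕ → F}
    (hβ1 : ∀ j : ℕ, 1 ≤ j → β 0 j ≠ 0 ∧
      β 0 j ∈ FF.RR (single (P 0) ((j : ℤ) - 1) - single (P 1) ((j : ℤ) - 1)))
    (hβi : ∀ i : Fin s, i ≠ 0 → ∀ j : ℕ, 1 ≤ j → β i j ≠ 0 ∧
      β i j ∈ FF.RR (single (P i) (j : ℤ) - single (P 0) (j : ℤ)))
    {d : Fin s → ℕ} {b : Fin s → ℕ → K}
    (h : ∑ i, ∑ j ∈ Finset.Icc 1 (d i), b i j • β i j = 0) :
    ∀ i, ∀ j ∈ Finset.Icc 1 (d i), b i j = 0 := by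
  classical
  have hpole : ∀ i ≠ 0, ∀ j ∈ Finset.Icc 1 (d i),
      FF.val (P i) (β i j) = ((0 - j : ℤ) : WithTop ℤ) :=
    fun i hi j hj => by
      obtain ⟨hβ0, hβmem⟩ := hβi i hi j (Finset.mem_Icc.mp hj).1
      rw [zero_sub]
      exact val_eq_of_mem_RR_single_sub_single (hP.ne hi) (by rw [hPdeg, hPdeg]) hβmem hβ0
  have hpole0 : ∀ j ∈ Finset.Icc 1 (d 0), FF.val (P 0) (β 0 j) = ((1 - j : ℤ) : WithTop ℤ) :=
    fun j hj => by
      obtain ⟨hβ0, hβmem⟩ := hβ1 j (Finset.mem_Icc.mp hj).1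
      rw [← neg_sub]
      exact val_eq_of_mem_RR_single_sub_single (hP.ne h01) (by rw [hPdeg, hPdeg]) hβmem hβ0
  have hnonneg : ∀ i k, k ≠ 0 → i ≠ k → ∀ j, 1 ≤ j → 0 ≤ FF.val (P k) (β i j) := by
    intro i k hk hik j hj
    rcases eq_or_ne i 0 with rfl | hi
    · exact val_nonneg_of_mem_RR_single_sub_single (hP.ne hk) (by omega) (hβ1 j hj).2
    · exact val_nonneg_of_mem_RR_single_sub_single (hP.ne hik.symm) (by omega) (hβi i hi j hj).2
  have hrow : ∀ i ≠ 0, ∀ j ∈ Finset.Icc 1 (d i), b i j = 0 := by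
    intro i hi
    rw [← Finset.add_sum_erase _ _ (Finset.mem_univ i), add_comm] at h
    refine coeff_eq_zero_of_add_sum_smul_eq_zero (P i) (strictAntiOn_val_of_eq_sub (hpole i hi))
      (fun j hj => ?_) h
    calc FF.val (P i) (β i j) < 0 := by
          rw [hpole i hi j hj, ← WithTop.coe_zero, WithTop.coe_lt_coe]
          linarith [(Finset.mem_Icc.mp hj).1]
      _ ≤ _ := AddValuation.map_le_sum _ fun k hk => AddValuation.map_le_sum _ fun j' hj' =>
          (hnonneg k i hi (Finset.ne_of_mem_erase hk) j' (Finset.mem_Icc.mp hj').1).trans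
            (val_le_val_smul _ _ _)
  rw [Fintype.sum_eq_single 0 fun i hi => Finset.sum_eq_zero fun j hj => by
    rw [hrow i hi j hj, zero_smul]] at h
  have hrow0 := coeff_eq_zero_of_add_sum_smul_eq_zero (P 0) (strictAntiOn_val_of_eq_sub hpole0)
    (fun j hj => by
      rw [hpole0 j hj, AddValuation.map_zero]; exact WithTop.coe_lt_top _) ((zero_add _).trans h)
  intro i
  rcases eq_or_ne i 0 with rfl | hi
  exacts [hrow0, hrow i hi]

lemma mem_RR_sum_single_sub_single {s : ℕ} [NeZero s] {P : Fin s → FF.Place}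
    {β : Fin s → ℕ → F}
    (hβ1 : ∀ j : ℕ, 1 ≤ j → β 0 j ≠ 0 ∧
      β 0 j ∈ FF.RR (single (P 0) ((j : ℤ) - 1) - single (P 1) ((j : ℤ) - 1)))
    (hβi : ∀ i : Fin s, i ≠ 0 → ∀ j : ℕ, 1 ≤ j → β i j ≠ 0 ∧
      β i j ∈ FF.RR (single (P i) (j : ℤ) - single (P 0) (j : ℤ)))
    {d : Fin s → ℕ} {i : Fin s} {j : ℕ} (hj : j ∈ Finset.Icc 1 (d i)) :
    β i j ∈ FF.RR (∑ k, single (P k) (d k : ℤ) - single (P 0) 1) := by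
  obtain ⟨hj1, hjd⟩ := Finset.mem_Icc.mp hj
  have hle : ∀ k, single (P k) (d k : ℤ) ≤ ∑ k, single (P k) (d k : ℤ) := fun k =>
    Finset.single_le_sum (f := fun k => single (P k) (d k : ℤ))
      (fun k _ => single_nonneg.mpr (Nat.cast_nonneg _)) (Finset.mem_univ k)
  rcases eq_or_ne i 0 with rfl | hi
  · refine RR_mono ?_ (hβ1 j hj1).2
    calc single (P 0) ((j : ℤ) - 1) - single (P 1) ((j : ℤ) - 1)
        ≤ single (P 0) (j : ℤ) - single (P 0) 1 := by
          rw [← single_sub]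
          exact sub_le_self _ (single_nonneg.mpr (by omega))
      _ ≤ _ := sub_le_sub_right ((single_le_single.mpr (by exact_mod_cast hjd)).trans (hle 0)) _
  · refine RR_mono ?_ (hβi i hi j hj1).2
    exact sub_le_sub ((single_le_single.mpr (by exact_mod_cast hjd)).trans (hle i))
      (single_le_single.mpr (by exact_mod_cast hj1))

end FFPlaces

open Finsupp in
/-- The paper's places `P₁, …, P_s` are `P 0, …, P (s-1)`, and the first disjunct of `hval`
encodes the convention `ν_{P_∞}(0) = ∞`. -/
theorem theorem1_rank_general (Fq : Type*) [Field Fq]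
    (FF : FFPlaces Fq (RatFunc Fq))
    (s : ℕ) [NeZero s] (hs2 : 2 ≤ s) (P : Fin s → FF.Place)
    (hP : Function.Injective P) (hPdeg : ∀ i, FF.deg (P i) = 1)
    (μ : ℕ) (Pinf : FF.Place) (hPinfdeg : FF.deg Pinf = μ)
    (hPinfne : ∀ i, Pinf ≠ P i)
    (β : Fin s → ℕ → RatFunc Fq)
    (hβ1 : ∀ j : ℕ, 1 ≤ j → β 0 j ≠ 0 ∧
      β 0 j ∈ FF.RR (single (P 0) ((j : ℤ) - 1) - single (P 1) ((j : ℤ) - 1)))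
    (hβi : ∀ i : Fin s, i ≠ 0 → ∀ j : ℕ, 1 ≤ j → β i j ≠ 0 ∧
      β i j ∈ FF.RR (single (P i) (j : ℤ) - single (P 0) (j : ℤ)))
    (ℓ : ℕ) (d : Fin s → ℕ)
    (hd2 : ∑ i, d i ≤ ℓ * μ)
    (b : Fin s → ℕ → Fq)
    (hval : (∑ i, ∑ j ∈ Finset.Icc 1 (d i), b i j • β i j) = 0 ∨
      (ℓ : ℤ) ≤ FF.v Pinf (∑ i, ∑ j ∈ Finset.Icc 1 (d i), b i j • β i j)) :
    ∀ (i : Fin s) (j : ℕ), 1 ≤ j → j ≤ d i → b i j = 0 := by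
  set E := ∑ k, single (P k) (d k : ℤ) - single (P 0) 1
  set f := ∑ i, ∑ j ∈ Finset.Icc 1 (d i), b i j • β i j
  have hfE : f ∈ FF.RR E := Submodule.sum_mem _ fun i _ => Submodule.sum_mem _ fun j hj =>
    Submodule.smul_mem _ _ (FFPlaces.mem_RR_sum_single_sub_single hβ1 hβi hj)
  have hEinf : E Pinf = 0 := by
    simp [E, single_eq_of_ne, hPinfne]
  have hfinf : (ℓ : WithTop ℤ) ≤ FF.val Pinf f := by
    rcases eq_or_ne f 0 with hf | hf
    · simp [hf]
    · rw [FFPlaces.val_of_ne_zero hf]; exact_mod_cast hval.resolve_left hf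
  have hdeg : FF.degD (E - single Pinf (ℓ : ℤ)) < 0 := by
    simp only [E, FFPlaces.degD_eq_linearCombination, map_sub, map_sum, linearCombination_single,
      smul_eq_mul, hPdeg, hPinfdeg]
    have hd2' : ((∑ i, d i : ℕ) : ℤ) ≤ ℓ * μ := by exact_mod_cast hd2
    push_cast at hd2'
    simp only [Nat.cast_one, mul_one]
    linarith
  have h01 : (0 : Fin s) ≠ 1 := fun h => by
    simp [Fin.ext_iff, Nat.mod_eq_of_lt hs2] at h
  intro i j hj1 hjd
  exact FFPlaces.coeff_eq_zero_of_sum_smul_eq_zero hP hPdeg h01 hβ1 hβi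
    (FFPlaces.eq_zero_of_mem_RR_of_degD_neg (FFPlaces.mem_RR_sub_single hfE hEinf hfinf) hdeg) i j
    (Finset.mem_Icc.mpr ⟨hj1, hjd⟩)

open Finsupp in
/-- Theorem 1 of the paper (core rank statement). In the rational function field `Fq(x)`
(genus `0`; Riemann–Roch is recorded in `hRR`) with distinct rational places
`P 0, …, P (s-1)` (the paper's `P₁, …, P_s`) and a further place `Pinf` of degree `μ`,
choose nonzero `β_j^{(1)} ∈ L((j-1)(P₁ - P₂))` and nonzero `β_j^{(i)} ∈ L(j(P_i - P₁))`
as in Lemma 1. If `ℓ ≥ 1`, `1 ≤ d₁ + ⋯ + d_s ≤ ℓμ`, and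
`β = ∑_{i=1}^s ∑_{j=1}^{d_i} b_j^{(i)} β_j^{(i)}` satisfies `ν_{Pinf}(β) ≥ ℓ`
(with the convention `ν_{Pinf}(0) = ∞`), then all `b_j^{(i)} = 0`. -/
theorem theorem1_rank (Fq : Type*) [Field Fq] [Fintype Fq]
    (FF : FFPlaces Fq (RatFunc Fq))
    (hRR : ∀ D : FF.Place →₀ ℤ, -1 ≤ FF.degD D →
      (Module.finrank Fq (FF.RR D) : ℤ) = FF.degD D + 1)
    (s : ℕ) [NeZero s] (hs2 : 2 ≤ s) (P : Fin s → FF.Place)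
    (hP : Function.Injective P) (hPdeg : ∀ i, FF.deg (P i) = 1)
    (μ : ℕ) (hμ : 1 ≤ μ) (Pinf : FF.Place) (hPinfdeg : FF.deg Pinf = μ)
    (hPinfne : ∀ i, Pinf ≠ P i)
    (β : Fin s → ℕ → RatFunc Fq)
    (hβ1 : ∀ j : ℕ, 1 ≤ j → β 0 j ≠ 0 ∧
      β 0 j ∈ FF.RR (single (P 0) ((j : ℤ) - 1) - single (P 1) ((j : ℤ) - 1)))
    (hβi : ∀ i : Fin s, i ≠ 0 → ∀ j : ℕ, 1 ≤ j → β i j ≠ 0 ∧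
      β i j ∈ FF.RR (single (P i) (j : ℤ) - single (P 0) (j : ℤ)))
    (ℓ : ℕ) (hℓ : 1 ≤ ℓ) (d : Fin s → ℕ)
    (hd1 : 1 ≤ ∑ i, d i) (hd2 : ∑ i, d i ≤ ℓ * μ)
    (b : Fin s → ℕ → Fq)
    (hval : (∑ i, ∑ j ∈ Finset.Icc 1 (d i), b i j • β i j) = 0 ∨
      (ℓ : ℤ) ≤ FF.v Pinf (∑ i, ∑ j ∈ Finset.Icc 1 (d i), b i j • β i j)) :
    ∀ (i : Fin s) (j : ℕ), 1 ≤ j → j ≤ d i → b i j = 0 :=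
  theorem1_rank_general Fq FF s hs2 P hP hPdeg μ Pinf hPinfdeg hPinfne β hβ1 hβi ℓ d hd2 b hval
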